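/- Let A and B be dendriform algebras and A⁺ = k ⊕ A, B⁺ = k ⊕ B their unitizations (with a≺1=a, 1≻a=a, 1≺a=a≻1=0). On A ⊠ B := (A⊗k) ⊕ (k⊗B) ⊕ (A⊗B) ⊆ A⁺⊗B⁺ define, whenever at least one of b, b' lies in B, (a⊗b) ≺ (a'⊗b') := (a⋆a') ⊗ (b≺b') and (a⊗b) ≻ (a'⊗b') := (a⋆a') ⊗ (b≻b'), and (a⊗1) ≺ (a'⊗1) := (a≺a')⊗1, (a⊗1) ≻ (a'⊗1) := (a≻a')⊗1, where ⋆ is the associative product of A⁺. Then A ⊠ B is a dendriform algebra. -/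

import Mathlib

/-!
Both operations are biadditive and `A ⊠ B` is additively generated by the elements `a ⊗ 1`,
`1 ⊗ b` and `a ⊗ b`, so each dendriform identity, an equality of triadditive expressions, only
has to be checked on triples of generators. There the multiplication table reduces it to a
dendriform identity of `A` (for three generators `a ⊗ 1`) or of `B`, together with associativity
of `⋆` on `A⁺`, which is the sum of the three dendriform identities of `A`.
-/

open TensorProduct LinearMap

noncomputable section

variable (k : Type*) [Field k] [CharZero k]
variable (A : Type*) [AddCommGroup A] [Module k A]
variable (B : Type*) [AddCommGroup B] [Module k B]

/-- The operation `≺` on `A ⊠ B = (A⊗k) ⊕ (k⊗B) ⊕ (A⊗B)`, realized on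
`A × B × (A ⊗ B)` (the three summands `a⊗1`, `1⊗b`, `a⊗b`).  It is the
bilinear extension of `(a⊗b) ≺ (a'⊗b') := (a ⋆ a') ⊗ (b ≺ b')` (when at least
one of `b, b'` lies in `B`) and `(a⊗1) ≺ (a'⊗1) := (a ≺ a') ⊗ 1`, where `⋆` is
the unital associative product of `A⁺` and the unitization conventions
`b ≺ 1 = b`, `1 ≺ b = 0` are used in `B⁺`. -/
def boxPrec (pA sA' : A →ₗ[k] A →ₗ[k] A) (pB : B →ₗ[k] B →ₗ[k] B)
    (x y : A × B × (A ⊗[k] B)) : A × B × (A ⊗[k] B) :=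
  (pA x.1 y.1, pB x.2.1 y.2.1,
    y.1 ⊗ₜ[k] x.2.1
      + lTensor A (pB x.2.1) y.2.2
      + rTensor B ((pA + sA').flip y.1) x.2.2
      + lTensor A (pB.flip y.2.1) x.2.2
      + (TensorProduct.map (TensorProduct.lift (pA + sA')) (TensorProduct.lift pB))
          ((TensorProduct.tensorTensorTensorComm k A B A B) (x.2.2 ⊗ₜ[k] y.2.2)))

/-- The operation `≻` on `A ⊠ B`, the bilinear extension of
`(a⊗b) ≻ (a'⊗b') := (a ⋆ a') ⊗ (b ≻ b')` (when at least one of `b, b'` lies in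
`B`) and `(a⊗1) ≻ (a'⊗1) := (a ≻ a') ⊗ 1`, with the conventions `1 ≻ b = b`,
`b ≻ 1 = 0` in `B⁺`. -/
def boxSucc (pA sA' : A →ₗ[k] A →ₗ[k] A) (sB : B →ₗ[k] B →ₗ[k] B)
    (x y : A × B × (A ⊗[k] B)) : A × B × (A ⊗[k] B) :=
  (sA' x.1 y.1, sB x.2.1 y.2.1,
    x.1 ⊗ₜ[k] y.2.1
      + rTensor B ((pA + sA') x.1) y.2.2
      + lTensor A (sB x.2.1) y.2.2
      + lTensor A (sB.flip y.2.1) x.2.2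
      + (TensorProduct.map (TensorProduct.lift (pA + sA')) (TensorProduct.lift sB))
          ((TensorProduct.tensorTensorTensorComm k A B A B) (x.2.2 ⊗ₜ[k] y.2.2)))

structure IsDendriform {M : Type*} [Add M] (prec succ : M → M → M) : Prop where
  prec_prec (a b c : M) : prec (prec a b) c = prec a (prec b c + succ b c)
  succ_prec (a b c : M) : prec (succ a b) c = succ a (prec b c)
  succ_succ (a b c : M) : succ a (succ b c) = succ (prec a b + succ a b) c

theorem AddSubmonoid.forall₃_of_closure_eq_top {M : Type*} [AddMonoid M] {g : Set M}
    (hg : AddSubmonoid.closure g = ⊤) {P : M → M → M → Prop}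
    (mem : ∀ a ∈ g, ∀ b ∈ g, ∀ c ∈ g, P a b c)
    (zero_left : ∀ b c, P 0 b c) (zero_mid : ∀ a c, P a 0 c) (zero_right : ∀ a b, P a b 0)
    (add_left : ∀ a a' b c, P a b c → P a' b c → P (a + a') b c)
    (add_mid : ∀ a b b' c, P a b c → P a b' c → P a (b + b') c)
    (add_right : ∀ a b c c', P a b c → P a b c' → P a b (c + c')) :
    ∀ a b c, P a b c := by
  have mem_closure (x : M) : x ∈ AddSubmonoid.closure g := hg ▸ AddSubmonoid.mem_top x
  have h_right (a : M) (ha : a ∈ g) (b : M) (hb : b ∈ g) (c : M) : P a b c :=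
    AddSubmonoid.closure_induction (mem a ha b hb) (zero_right a b)
      (fun _ _ _ _ => add_right a b _ _) (mem_closure c)
  have h_mid (a : M) (ha : a ∈ g) (b c : M) : P a b c :=
    AddSubmonoid.closure_induction (fun b hb => h_right a ha b hb c) (zero_mid a c)
      (fun _ _ _ _ => add_mid a _ _ c) (mem_closure b)
  exact fun a b c => AddSubmonoid.closure_induction (fun a ha => h_mid a ha b c) (zero_left b c)
    (fun _ _ _ _ => add_left _ _ b c) (mem_closure a)

theorem IsDendriform.of_closure_eq_top {M : Type*} [AddCommMonoid M] (p s : M →+ M →+ M)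
    {g : Set M} (hg : AddSubmonoid.closure g = ⊤)
    (prec_prec : ∀ a ∈ g, ∀ b ∈ g, ∀ c ∈ g, p (p a b) c = p a (p b c + s b c))
    (succ_prec : ∀ a ∈ g, ∀ b ∈ g, ∀ c ∈ g, p (s a b) c = s a (p b c))
    (succ_succ : ∀ a ∈ g, ∀ b ∈ g, ∀ c ∈ g, s a (s b c) = s (p a b + s a b) c) :
    IsDendriform (p · ·) (s · ·) := by
  refine ⟨AddSubmonoid.forall₃_of_closure_eq_top hg prec_prec ?_ ?_ ?_ ?_ ?_ ?_,
    AddSubmonoid.forall₃_of_closure_eq_top hg succ_prec ?_ ?_ ?_ ?_ ?_ ?_,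
    AddSubmonoid.forall₃_of_closure_eq_top hg succ_succ ?_ ?_ ?_ ?_ ?_ ?_⟩
  all_goals first
    | intro _ _ _ _ h h'
      simp only [map_add, AddMonoidHom.add_apply, h, h'] <;> abel
    | simp

section

omit [CharZero k]

local notation:35 A " ⊠ " B => A × B × (A ⊗[k] B)

def boxGenerators : Set (A ⊠ B) :=
  {x | (∃ a, x = (a, 0, 0)) ∨ (∃ b, x = (0, b, 0)) ∨ ∃ a b, x = (0, 0, a ⊗ₜ[k] b)}

theorem closure_boxGenerators : AddSubmonoid.closure (boxGenerators k A B) = ⊤ := by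
  have mem (x) (hx : x ∈ boxGenerators k A B) := AddSubmonoid.subset_closure hx
  rw [eq_top_iff]
  rintro ⟨a, b, t⟩ -
  have ht : ((0, 0, t) : A ⊠ B) ∈ AddSubmonoid.closure (boxGenerators k A B) := by
    induction t using TensorProduct.induction_on with
    | zero => exact zero_mem _
    | tmul a b => exact mem _ (.inr (.inr ⟨a, b, rfl⟩))
    | add t t' ht ht' => simpa using add_mem ht ht'
  have hsum : (a, b, t) = ((a, 0, 0) + (0, b, 0) + (0, 0, t) : A ⊠ B) := by simp
  rw [hsum]
  exact add_mem (add_mem (mem _ (.inl ⟨a, rfl⟩)) (mem _ (.inr (.inl ⟨b, rfl⟩)))) ht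

variable {k A B} (pA sA' : A →ₗ[k] A →ₗ[k] A) (pB sB : B →ₗ[k] B →ₗ[k] B)

local infixl:70 " ≺ " => boxPrec k A B pA sA' pB
local infixl:70 " ≻ " => boxSucc k A B pA sA' sB

theorem boxPrec_add_left (x x' y : A ⊠ B) : (x + x') ≺ y = x ≺ y + x' ≺ y := by
  ext <;> simp [boxPrec, tmul_add, add_tmul]
  abel

theorem boxPrec_add_right (x y y' : A ⊠ B) : x ≺ (y + y') = x ≺ y + x ≺ y' := by
  ext <;> simp [boxPrec, tmul_add, add_tmul]
  abel

theorem boxSucc_add_left (x x' y : A ⊠ B) : (x + x') ≻ y = x ≻ y + x' ≻ y := by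
  ext <;> simp [boxSucc, add_tmul]
  abel

theorem boxSucc_add_right (x y y' : A ⊠ B) : x ≻ (y + y') = x ≻ y + x ≻ y' := by
  ext <;> simp [boxSucc, tmul_add]
  abel

theorem boxPrec_zero_left (y : A ⊠ B) : 0 ≺ y = 0 := by
  simp [boxPrec]

theorem boxSucc_zero_right (x : A ⊠ B) : x ≻ 0 = 0 := by
  simp [boxSucc]

def boxPrecHom : (A ⊠ B) →+ (A ⊠ B) →+ (A ⊠ B) :=
  .mk' (fun x => .mk' (x ≺ ·) (boxPrec_add_right pA sA' pB x))
    fun x x' => AddMonoidHom.ext (boxPrec_add_left pA sA' pB x x')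

def boxSuccHom : (A ⊠ B) →+ (A ⊠ B) →+ (A ⊠ B) :=
  .mk' (fun x => .mk' (x ≻ ·) (boxSucc_add_right pA sA' sB x))
    fun x x' => AddMonoidHom.ext (boxSucc_add_left pA sA' sB x x')

variable (a a' : A) (b b' : B)

@[simp] theorem boxPrec_fst_fst : (a, 0, 0) ≺ (a', 0, 0) = (pA a a', 0, 0) := by simp [boxPrec]
@[simp] theorem boxPrec_fst_snd : (a, 0, 0) ≺ (0, b', 0) = 0 := by simp [boxPrec]
@[simp] theorem boxPrec_fst_tmul : (a, 0, 0) ≺ (0, 0, a' ⊗ₜ b') = 0 := by simp [boxPrec]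
@[simp] theorem boxPrec_snd_fst : (0, b, 0) ≺ (a', 0, 0) = (0, 0, a' ⊗ₜ b) := by simp [boxPrec]
@[simp] theorem boxPrec_snd_snd : (0, b, 0) ≺ (0, b', 0) = (0, pB b b', 0) := by simp [boxPrec]
@[simp] theorem boxPrec_snd_tmul : (0, b, 0) ≺ (0, 0, a' ⊗ₜ b') = (0, 0, a' ⊗ₜ pB b b') := by
  simp [boxPrec]
@[simp] theorem boxPrec_tmul_fst : (0, 0, a ⊗ₜ b) ≺ (a', 0, 0) = (0, 0, (pA + sA') a a' ⊗ₜ b) := by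
  simp [boxPrec]
@[simp] theorem boxPrec_tmul_snd : (0, 0, a ⊗ₜ b) ≺ (0, b', 0) = (0, 0, a ⊗ₜ pB b b') := by
  simp [boxPrec]
@[simp] theorem boxPrec_tmul_tmul :
    (0, 0, a ⊗ₜ b) ≺ (0, 0, a' ⊗ₜ b') = (0, 0, (pA + sA') a a' ⊗ₜ pB b b') := by
  simp [boxPrec]

@[simp] theorem boxSucc_fst_fst : (a, 0, 0) ≻ (a', 0, 0) = (sA' a a', 0, 0) := by simp [boxSucc]
@[simp] theorem boxSucc_fst_snd : (a, 0, 0) ≻ (0, b', 0) = (0, 0, a ⊗ₜ b') := by simp [boxSucc]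
@[simp] theorem boxSucc_fst_tmul :
    (a, 0, 0) ≻ (0, 0, a' ⊗ₜ b') = (0, 0, (pA + sA') a a' ⊗ₜ b') := by
  simp [boxSucc, add_tmul]
@[simp] theorem boxSucc_snd_fst : (0, b, 0) ≻ (a', 0, 0) = 0 := by simp [boxSucc]
@[simp] theorem boxSucc_snd_snd : (0, b, 0) ≻ (0, b', 0) = (0, sB b b', 0) := by simp [boxSucc]
@[simp] theorem boxSucc_snd_tmul : (0, b, 0) ≻ (0, 0, a' ⊗ₜ b') = (0, 0, a' ⊗ₜ sB b b') := by
  simp [boxSucc]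
@[simp] theorem boxSucc_tmul_fst : (0, 0, a ⊗ₜ b) ≻ (a', 0, 0) = 0 := by simp [boxSucc]
@[simp] theorem boxSucc_tmul_snd : (0, 0, a ⊗ₜ b) ≻ (0, b', 0) = (0, 0, a ⊗ₜ sB b b') := by
  simp [boxSucc]
@[simp] theorem boxSucc_tmul_tmul :
    (0, 0, a ⊗ₜ b) ≻ (0, 0, a' ⊗ₜ b') = (0, 0, (pA + sA') a a' ⊗ₜ sB b b') := by
  simp [boxSucc]

theorem isDendriform_box (hA : IsDendriform (pA · ·) (sA' · ·))
    (hB : IsDendriform (pB · ·) (sB · ·)) :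
    IsDendriform (boxPrec k A B pA sA' pB) (boxSucc k A B pA sA' sB) := by
  refine IsDendriform.of_closure_eq_top (boxPrecHom pA sA' pB) (boxSuccHom pA sA' sB)
    (closure_boxGenerators k A B) ?_ ?_ ?_ <;>
  rintro _ (⟨a, rfl⟩ | ⟨b, rfl⟩ | ⟨a, b, rfl⟩) _ (⟨a', rfl⟩ | ⟨b', rfl⟩ | ⟨a', b', rfl⟩) _
    (⟨a'', rfl⟩ | ⟨b'', rfl⟩ | ⟨a'', b'', rfl⟩) <;>
  -- keep `⋆ = pA + sA'` folded until the table has been applied to products of three generators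
  simp [-LinearMap.add_apply, -Prod.mk_add_mk, boxPrecHom, boxSuccHom, boxPrec_add_right,
    boxSucc_add_left, boxPrec_zero_left, boxSucc_zero_right] <;>
  simp [hA.prec_prec, hA.succ_prec, hA.succ_succ, hB.prec_prec, hB.succ_prec, hB.succ_succ,
    tmul_add, add_tmul] <;>
  abel

end

/-- Let `A` and `B` be dendriform algebras (operations
`pA = ≺_A, sA' = ≻_A` and `pB = ≺_B, sB = ≻_B`).  Then `A ⊠ B`, with the
operations `≺, ≻` defined via the coherent unit action
(`(a⊗b) ≺ (a'⊗b') = (a⋆a')⊗(b≺b')`, `(a⊗b) ≻ (a'⊗b') = (a⋆a')⊗(b≻b')`, and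
`(a⊗1)≺(a'⊗1) = (a≺a')⊗1`, `(a⊗1)≻(a'⊗1) = (a≻a')⊗1`), is a dendriform
algebra. -/
theorem box_dendriform
    (pA sA' : A →ₗ[k] A →ₗ[k] A) (pB sB : B →ₗ[k] B →ₗ[k] B)
    (hA1 : ∀ a b c : A, pA (pA a b) c = pA a (pA b c + sA' b c))
    (hA2 : ∀ a b c : A, pA (sA' a b) c = sA' a (pA b c))
    (hA3 : ∀ a b c : A, sA' a (sA' b c) = sA' (pA a b + sA' a b) c)
    (hB1 : ∀ a b c : B, pB (pB a b) c = pB a (pB b c + sB b c))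
    (hB2 : ∀ a b c : B, pB (sB a b) c = sB a (pB b c))
    (hB3 : ∀ a b c : B, sB a (sB b c) = sB (pB a b + sB a b) c) :
    ∀ x y z : A × B × (A ⊗[k] B),
      boxPrec k A B pA sA' pB (boxPrec k A B pA sA' pB x y) z
        = boxPrec k A B pA sA' pB x
            (boxPrec k A B pA sA' pB y z + boxSucc k A B pA sA' sB y z) ∧
      boxPrec k A B pA sA' pB (boxSucc k A B pA sA' sB x y) z
        = boxSucc k A B pA sA' sB x (boxPrec k A B pA sA' pB y z) ∧
      boxSucc k A B pA sA' sB x (boxSucc k A B pA sA' sB y z)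
        = boxSucc k A B pA sA' sB
            (boxPrec k A B pA sA' pB x y + boxSucc k A B pA sA' sB x y) z := by
  have h := isDendriform_box pA sA' pB sB ⟨hA1, hA2, hA3⟩ ⟨hB1, hB2, hB3⟩
  exact fun x y z => ⟨h.prec_prec x y z, h.succ_prec x y z, h.succ_succ x y z⟩

end
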